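/- Let F ∈ H(2), ε ≥ 0 and δ > 0, and assume that every finite ε-pseudo-orbit (ξ_j)_{j=0}^n of F is δ-shadowed by an orbit of F, i.e. there exists x ∈ ℝ² with ‖F^j(x) − ξ_j‖ < δ for all 0 ≤ j ≤ n. Then d_H(K_n(F), K_n^ε(F)) ≤ 2δ/n for every n ≥ 1, and consequently ρ_ε(F) = ρ(F). -/

import Mathlib

open Metric Set Pointwise

noncomputable section

abbrev E (m : ℕ) := EuclideanSpace ℝ (Fin m)

def cube (m : ℕ) : Set (E m) := {x | ∀ i, x i ∈ Set.Icc (0:ℝ) 1}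

def intVec {m : ℕ} (t : Fin m → ℤ) : E m := WithLp.toLp 2 (fun i => (t i : ℝ))

def IsLift {m : ℕ} (F : E m → E m) : Prop :=
  Continuous F ∧ ∀ (x : E m) (t : Fin m → ℤ), F (x + intVec t) = F x + intVec t

def IsHomeoLift {m : ℕ} (F : E m → E m) : Prop :=
  IsLift F ∧ ∃ h : (E m) ≃ₜ (E m), ⇑h = F

def Kset {m : ℕ} (F : E m → E m) (k : ℕ) : Set (E m) :=
  {v | ∃ x ∈ cube m, v = (k : ℝ)⁻¹ • (F^[k] x - x)}

def rotSet {m : ℕ} (F : E m → E m) : Set (E m) :=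
  ⋂ n ≥ 1, closure (⋃ k ≥ n, Kset F k)

def IsPseudoOrbit {m : ℕ} (F : E m → E m) (ε : ℝ) (n : ℕ) (ξ : ℕ → E m) : Prop :=
  ∀ j < n, ‖F (ξ j) - ξ (j + 1)‖ ≤ ε

def KsetEps {m : ℕ} (F : E m → E m) (ε : ℝ) (k : ℕ) : Set (E m) :=
  {v | ∃ ξ : ℕ → E m, IsPseudoOrbit F ε k ξ ∧ ξ 0 ∈ cube m ∧ v = (k : ℝ)⁻¹ • (ξ k - ξ 0)}

def rotSetEps {m : ℕ} (F : E m → E m) (ε : ℝ) : Set (E m) :=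
  ⋂ n ≥ 1, closure (⋃ k ≥ n, KsetEps F ε k)

/-!
A true orbit `x` that `δ`-shadows an `ε`-pseudo-orbit `ξ` of length `n` starts and ends within `δ`
of `ξ`, so the two displacements divided by `n` differ by at most `2δ/n`; translating `x` by an
integer vector into the unit cube does not change `Fⁿ(x) - x`. Conversely every orbit is an
`ε`-pseudo-orbit, so `Kₙ ⊆ Kₙ^ε`, and since `2δ/n → 0` the two sets of limit points coincide.
-/

open Filter Topology

section Lift

variable {m : ℕ} {F : E m → E m}

lemma IsLift.iterate_add_intVec (hF : IsLift F) (k : ℕ) (x : E m) (t : Fin m → ℤ) :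
    F^[k] (x + intVec t) = F^[k] x + intVec t := by
  induction k generalizing x with
  | zero => simp
  | succ k ih => rw [Function.iterate_succ_apply, Function.iterate_succ_apply, hF.2, ih]

lemma exists_add_intVec_mem_cube (x : E m) : ∃ t : Fin m → ℤ, x + intVec t ∈ cube m := by
  refine ⟨fun i => -⌊x i⌋, fun i => ?_⟩
  have hfract : (x + intVec fun i => -⌊x i⌋) i = Int.fract (x i) := by
    simp [intVec, Int.fract, sub_eq_add_neg]
  rw [hfract]
  exact ⟨Int.fract_nonneg _, (Int.fract_lt_one _).le⟩

lemma IsLift.smul_iterate_sub_mem_Kset (hF : IsLift F) (k : ℕ) (x : E m) :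
    (k : ℝ)⁻¹ • (F^[k] x - x) ∈ Kset F k := by
  obtain ⟨t, ht⟩ := exists_add_intVec_mem_cube x
  refine ⟨x + intVec t, ht, ?_⟩
  rw [hF.iterate_add_intVec, add_sub_add_right_eq_sub]

lemma Kset_subset_KsetEps {ε : ℝ} (hε : 0 ≤ ε) (k : ℕ) : Kset F k ⊆ KsetEps F ε k := by
  rintro _ ⟨x, hx, rfl⟩
  refine ⟨fun j => F^[j] x, fun j _ => ?_, hx, rfl⟩
  simpa [← Function.iterate_succ_apply' F j x] using hε

lemma IsLift.exists_mem_Kset_dist_le_of_shadowing (hF : IsLift F) {ε δ : ℝ} {k : ℕ}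
    (hshadow : ∀ ξ : ℕ → E m, IsPseudoOrbit F ε k ξ → ∃ x : E m, ∀ j ≤ k, ‖F^[j] x - ξ j‖ < δ)
    {w : E m} (hw : w ∈ KsetEps F ε k) : ∃ u ∈ Kset F k, dist w u ≤ 2 * δ / k := by
  obtain ⟨ξ, hξ, -, rfl⟩ := hw
  obtain ⟨x, hx⟩ := hshadow ξ hξ
  have hend : dist (ξ k) (F^[k] x) ≤ δ := by
    rw [dist_comm, dist_eq_norm]; exact (hx k le_rfl).le
  have hstart : dist (ξ 0) x ≤ δ := by
    rw [dist_comm, dist_eq_norm]; simpa using (hx 0 k.zero_le).le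
  refine ⟨_, hF.smul_iterate_sub_mem_Kset k x, ?_⟩
  calc dist ((k : ℝ)⁻¹ • (ξ k - ξ 0)) ((k : ℝ)⁻¹ • (F^[k] x - x))
      = (k : ℝ)⁻¹ * dist (ξ k - ξ 0) (F^[k] x - x) := by
        rw [dist_smul₀, Real.norm_of_nonneg (by positivity)]
    _ ≤ (k : ℝ)⁻¹ * (δ + δ) := by gcongr; exact dist_sub_sub_le_of_le hend hstart
    _ = 2 * δ / k := by ring

end Lift

lemma biInter_closure_biUnion_eq_of_tendsto {X : Type*} [PseudoMetricSpace X] {A B : ℕ → Set X}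
    {r : ℕ → ℝ} (hr : Tendsto r atTop (𝓝 0)) (hAB : ∀ k, A k ⊆ B k)
    (hBA : ∀ k, ∀ b ∈ B k, ∃ a ∈ A k, dist b a ≤ r k) :
    ⋂ n ≥ 1, closure (⋃ k ≥ n, B k) = ⋂ n ≥ 1, closure (⋃ k ≥ n, A k) := by
  refine Subset.antisymm (fun v hv => mem_iInter₂.mpr fun n hn => ?_)
    (biInter_mono subset_rfl fun n _ => closure_mono <| biUnion_mono subset_rfl fun k _ => hAB k)
  refine Metric.mem_closure_iff.mpr fun η hη => ?_
  obtain ⟨N, hN⟩ := (Metric.tendsto_atTop.mp hr) (η / 2) (half_pos hη)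
  have hvN := Metric.mem_closure_iff.mp (mem_iInter₂.mp hv (max n N) (hn.trans (le_max_left _ _)))
  obtain ⟨b, hb, hvb⟩ := hvN (η / 2) (half_pos hη)
  obtain ⟨k, hk, hbk⟩ := mem_iUnion₂.mp hb
  obtain ⟨a, ha, hba⟩ := hBA k b hbk
  have hrk : r k < η / 2 := (le_abs_self _).trans_lt <| by
    simpa [Real.dist_eq] using hN k ((le_max_right _ _).trans hk)
  refine ⟨a, mem_iUnion₂.mpr ⟨k, (le_max_left _ _).trans hk, ha⟩, ?_⟩
  calc dist v a ≤ dist v b + dist b a := dist_triangle _ _ _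
    _ < η / 2 + η / 2 := add_lt_add_of_lt_of_le hvb (hba.trans hrk.le)
    _ = η := add_halves η

/-- If every finite ε-pseudo-orbit of `F` is δ-shadowed by a true orbit, then
`d_H(K_n(F), K_n^ε(F)) ≤ 2δ/n` for all `n ≥ 1`, and `ρ_ε(F) = ρ(F)`. -/
theorem finite_shadowing_epsRotSet_eq_rotSet {F : E 2 → E 2} (hF : IsHomeoLift F)
    {ε δ : ℝ} (hε : 0 ≤ ε) (hδ : 0 < δ)
    (hshadow : ∀ (n : ℕ) (ξ : ℕ → E 2), IsPseudoOrbit F ε n ξ →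
      ∃ x : E 2, ∀ j ≤ n, ‖F^[j] x - ξ j‖ < δ) :
    (∀ n : ℕ, 1 ≤ n →
        Metric.hausdorffDist (Kset F n) (KsetEps F ε n) ≤ 2 * δ / n) ∧
      rotSetEps F ε = rotSet F := by
  have hnear : ∀ k, ∀ w ∈ KsetEps F ε k, ∃ u ∈ Kset F k, dist w u ≤ 2 * δ / k :=
    fun k _ hw => hF.1.exists_mem_Kset_dist_le_of_shadowing (hshadow k) hw
  refine ⟨fun n _ => ?_, ?_⟩
  · exact Metric.hausdorffDist_le_of_mem_dist (by positivity)
      (fun v hv => ⟨v, Kset_subset_KsetEps hε n hv, by rw [dist_self]; positivity⟩) (hnear n)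
  · exact biInter_closure_biUnion_eq_of_tendsto (tendsto_const_div_atTop_nhds_zero_nat (2 * δ))
      (Kset_subset_KsetEps hε) hnear
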